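/- Consider the successive approximation sequence G₀, G_{n+1} := G₀ + Φ_{G_n} for the kernel integral equation, and set ΔG_n := G_{n+1} - G_n. Let f̄ := sup |f|, λ₁ := max{|λ₀|, max_{(x,y)∈[0,1]×[0,1]} |λ₀ - c₁(x) + c₁(y)|} and M := (λ₁ + f̄)/2. Then for every n ∈ ℕ₀ and every (ξ,η) ∈ E one has |ΔG_n(ξ,η)| ≤ (M^{n+2}/(n+1)!) · (ξ+η)^{n+1}. -/
import Mathlib

set_option maxHeartbeats 1000000


open MeasureTheory intervalIntegral

/-- The domain `E = {(ξ,η) : 0 ≤ η ≤ 1, η ≤ ξ ≤ 2-η}`. -/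
def Eset : Set (ℝ × ℝ) := {q | 0 ≤ q.2 ∧ q.2 ≤ 1 ∧ q.2 ≤ q.1 ∧ q.1 ≤ 2 - q.2}

/-- `μ̃(ξ,η) = λ₀ - c₁((ξ+η)/2) + c₁((ξ-η)/2)`. -/
noncomputable def muT (c1 : ℝ → ℝ) (lam0 ξ η : ℝ) : ℝ :=
  lam0 - c1 ((ξ + η) / 2) + c1 ((ξ - η) / 2)

/-- The integral operator `Φ_H` of the kernel integral equation. -/
noncomputable def PhiOp (c1 : ℝ → ℝ) (lam0 : ℝ) (f : ℝ → ℝ → ℝ) (H : ℝ → ℝ → ℝ)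
    (ξ η : ℝ) : ℝ :=
  (1 / 4) * (∫ τ in η..ξ, ∫ s in (0:ℝ)..η, muT c1 lam0 τ s * H τ s)
    + (1 / 2) * (∫ τ in (0:ℝ)..η, ∫ s in (0:ℝ)..τ, muT c1 lam0 τ s * H τ s)
    + (1 / 4) * (∫ z in η..ξ, ∫ s in (0:ℝ)..η, ∫ τ in z..(z + η - s),
        f ((τ - s) / 2) (z - (τ + s) / 2) * H τ s)
    + (1 / 2) * (∫ z in (0:ℝ)..η, ∫ s in (0:ℝ)..z, ∫ τ in z..(2 * z - s),
        f ((τ - s) / 2) (z - (τ + s) / 2) * H τ s)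

/-- The inhomogeneous term `G₀` of the kernel integral equation. -/
noncomputable def Gzero (lam0 : ℝ) (f : ℝ → ℝ → ℝ) (ξ η : ℝ) : ℝ :=
  lam0 / 4 * (ξ + η)
    + (1 / 4) * (∫ τ in η..ξ, ∫ s in (0:ℝ)..η, f ((τ + s) / 2) ((τ - s) / 2))
    + (1 / 2) * (∫ τ in (0:ℝ)..η, ∫ s in (0:ℝ)..τ, f ((τ + s) / 2) ((τ - s) / 2))

section Helpers

lemma mem_Eset {a b : ℝ} : (a, b) ∈ Eset ↔ 0 ≤ b ∧ b ≤ 1 ∧ b ≤ a ∧ a ≤ 2 - b := Iff.rfl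

lemma contParam {X : Type*} [TopologicalSpace X] {F : X → ℝ → ℝ}
    (hF : Continuous (Function.uncurry F)) {a b : X → ℝ}
    (ha : Continuous a) (hb : Continuous b) :
    Continuous fun x => ∫ t in a x..b x, F x t := by
  have key : ∀ x, (∫ t in a x..b x, F x t)
      = (∫ t in (0:ℝ)..b x, F x t) - ∫ t in (0:ℝ)..a x, F x t := by
    intro x
    rw [intervalIntegral.integral_interval_sub_left
      ((hF.uncurry_left x).intervalIntegrable _ _) ((hF.uncurry_left x).intervalIntegrable _ _)]
  simp only [key]
  exact (intervalIntegral.continuous_parametric_intervalIntegral_of_continuous hF hb).sub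
    (intervalIntegral.continuous_parametric_intervalIntegral_of_continuous hF ha)

lemma ipow (a b h : ℝ) (m : ℕ) :
    (∫ x in a..b, (x + h) ^ m) = ((b + h) ^ (m + 1) - (a + h) ^ (m + 1)) / (m + 1) := by
  rw [intervalIntegral.integral_comp_add_right (fun x => x ^ m) h, integral_pow]

lemma ipow2 (a b h : ℝ) (m : ℕ) :
    (∫ x in a..b, (h + x) ^ m) = ((h + b) ^ (m + 1) - (h + a) ^ (m + 1)) / (m + 1) := by
  rw [intervalIntegral.integral_comp_add_left (fun x => x ^ m) h, integral_pow]

lemma absint {V B : ℝ → ℝ} {a b : ℝ} (hab : a ≤ b) (hV : Continuous V) (hB : Continuous B)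
    (h : ∀ x ∈ Set.Icc a b, |V x| ≤ B x) : |∫ x in a..b, V x| ≤ ∫ x in a..b, B x :=
  (intervalIntegral.abs_integral_le_integral_abs hab).trans
    (intervalIntegral.integral_mono_on hab (hV.abs.intervalIntegrable _ _)
      (hB.intervalIntegrable _ _) h)

end Helpers

section Cont
variable {c : ℝ → ℝ} {lam0 : ℝ} {f H : ℝ → ℝ → ℝ}

lemma muT_cont (hc : Continuous c) : Continuous fun p : ℝ × ℝ => muT c lam0 p.1 p.2 := by
  unfold muT
  exact (continuous_const.sub (hc.comp (by fun_prop))).add (hc.comp (by fun_prop))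

lemma g1_cont (hc : Continuous c) (hH : Continuous fun q : ℝ × ℝ => H q.1 q.2) :
    Continuous (Function.uncurry fun τ s : ℝ => muT c lam0 τ s * H τ s) :=
  (muT_cont hc).mul hH

lemma fhat_cont (hfc : Continuous fun q : ℝ × ℝ => f q.1 q.2)
    (hH : Continuous fun q : ℝ × ℝ => H q.1 q.2)
    {X : Type*} [TopologicalSpace X] {u v w : X → ℝ}
    (hu : Continuous u) (hv : Continuous v) (hw : Continuous w) :
    Continuous fun x : X => f ((w x - v x) / 2) (u x - (w x + v x) / 2) * H (w x) (v x) := by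
  have h1 : Continuous fun x : X => ((w x - v x) / 2, u x - (w x + v x) / 2) := by fun_prop
  have h2 : Continuous fun x : X => (w x, v x) := by fun_prop
  exact (hfc.comp h1).mul (hH.comp h2)

lemma I1_cont (hc : Continuous c) (hH : Continuous fun q : ℝ × ℝ => H q.1 q.2) (η : ℝ) :
    Continuous fun τ : ℝ => ∫ s in (0:ℝ)..η, muT c lam0 τ s * H τ s :=
  intervalIntegral.continuous_parametric_intervalIntegral_of_continuous' (g1_cont hc hH) 0 η

lemma I2_cont (hc : Continuous c) (hH : Continuous fun q : ℝ × ℝ => H q.1 q.2) :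
    Continuous fun τ : ℝ => ∫ s in (0:ℝ)..τ, muT c lam0 τ s * H τ s :=
  contParam (F := fun (τ : ℝ) s => muT c lam0 τ s * H τ s) (g1_cont hc hH)
    continuous_const continuous_id

lemma A3_cont (hfc : Continuous fun q : ℝ × ℝ => f q.1 q.2)
    (hH : Continuous fun q : ℝ × ℝ => H q.1 q.2) :
    Continuous fun w : ℝ × ℝ × ℝ =>
      ∫ τ in w.2.1..(w.2.1 + w.1 - w.2.2),
        f ((τ - w.2.2) / 2) (w.2.1 - (τ + w.2.2) / 2) * H τ w.2.2 := by
  refine contParam (F := fun (w : ℝ × ℝ × ℝ) τ =>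
    f ((τ - w.2.2) / 2) (w.2.1 - (τ + w.2.2) / 2) * H τ w.2.2) ?_ (by fun_prop) (by fun_prop)
  exact fhat_cont hfc hH (u := fun q : (ℝ × ℝ × ℝ) × ℝ => q.1.2.1)
    (v := fun q => q.1.2.2) (w := fun q => q.2) (by fun_prop) (by fun_prop) (by fun_prop)

lemma B3_cont (hfc : Continuous fun q : ℝ × ℝ => f q.1 q.2)
    (hH : Continuous fun q : ℝ × ℝ => H q.1 q.2) :
    Continuous fun v : ℝ × ℝ =>
      ∫ s in (0:ℝ)..v.1, ∫ τ in v.2..(v.2 + v.1 - s),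
        f ((τ - s) / 2) (v.2 - (τ + s) / 2) * H τ s := by
  refine contParam (F := fun (v : ℝ × ℝ) s => ∫ τ in v.2..(v.2 + v.1 - s),
      f ((τ - s) / 2) (v.2 - (τ + s) / 2) * H τ s) (a := fun _ => (0:ℝ))
    (b := fun v : ℝ × ℝ => v.1) ?_ continuous_const continuous_fst
  have h2 := (A3_cont hfc hH).comp
    (show Continuous fun q : (ℝ × ℝ) × ℝ => (q.1.1, q.1.2, q.2) by fun_prop)
  simp only [Function.comp_def] at h2; exact h2

lemma A4_cont (hfc : Continuous fun q : ℝ × ℝ => f q.1 q.2)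
    (hH : Continuous fun q : ℝ × ℝ => H q.1 q.2) :
    Continuous fun w : ℝ × ℝ =>
      ∫ τ in w.1..(2 * w.1 - w.2), f ((τ - w.2) / 2) (w.1 - (τ + w.2) / 2) * H τ w.2 := by
  refine contParam (F := fun (w : ℝ × ℝ) τ =>
    f ((τ - w.2) / 2) (w.1 - (τ + w.2) / 2) * H τ w.2) ?_ continuous_fst (by fun_prop)
  exact fhat_cont hfc hH (u := fun q : (ℝ × ℝ) × ℝ => q.1.1)
    (v := fun q => q.1.2) (w := fun q => q.2) (by fun_prop) (by fun_prop) (by fun_prop)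

lemma B4_cont (hfc : Continuous fun q : ℝ × ℝ => f q.1 q.2)
    (hH : Continuous fun q : ℝ × ℝ => H q.1 q.2) :
    Continuous fun z : ℝ =>
      ∫ s in (0:ℝ)..z, ∫ τ in z..(2 * z - s),
        f ((τ - s) / 2) (z - (τ + s) / 2) * H τ s := by
  refine contParam (F := fun (z : ℝ) s => ∫ τ in z..(2 * z - s),
      f ((τ - s) / 2) (z - (τ + s) / 2) * H τ s) ?_ continuous_const continuous_id
  have h2 := (A4_cont hfc hH).comp (show Continuous fun q : ℝ × ℝ => (q.1, q.2) by fun_prop)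
  simp only [Function.comp_def] at h2; exact h2

lemma phi_cont (hc : Continuous c) (hfc : Continuous fun q : ℝ × ℝ => f q.1 q.2)
    (hH : Continuous fun q : ℝ × ℝ => H q.1 q.2) :
    Continuous fun p : ℝ × ℝ => PhiOp c lam0 f H p.1 p.2 := by
  have hg1 : Continuous fun p : ℝ × ℝ => muT c lam0 p.1 p.2 * H p.1 p.2 :=
    (muT_cont hc).mul hH
  have inner1 : Continuous fun r : (ℝ × ℝ) × ℝ =>
      ∫ s in (0:ℝ)..r.1.2, muT c lam0 r.2 s * H r.2 s := by
    refine contParam (F := fun (r : (ℝ × ℝ) × ℝ) s => muT c lam0 r.2 s * H r.2 s)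
      ?_ continuous_const (by fun_prop)
    exact hg1.comp (show Continuous fun q : ((ℝ × ℝ) × ℝ) × ℝ => (q.1.2, q.2) by fun_prop)
  have T1 : Continuous fun p : ℝ × ℝ =>
      ∫ τ in p.2..p.1, ∫ s in (0:ℝ)..p.2, muT c lam0 τ s * H τ s :=
    contParam (F := fun (p : ℝ × ℝ) τ => ∫ s in (0:ℝ)..p.2, muT c lam0 τ s * H τ s)
      inner1 continuous_snd continuous_fst
  have T2 : Continuous fun p : ℝ × ℝ =>
      ∫ τ in (0:ℝ)..p.2, ∫ s in (0:ℝ)..τ, muT c lam0 τ s * H τ s :=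
    contParam (F := fun (_ : ℝ × ℝ) τ => ∫ s in (0:ℝ)..τ, muT c lam0 τ s * H τ s)
      (by have h2 := (I2_cont (lam0 := lam0) hc hH).comp
            (continuous_snd : Continuous fun q : (ℝ × ℝ) × ℝ => q.2)
          simp only [Function.comp_def] at h2; exact h2) continuous_const continuous_snd
  have T3 : Continuous fun p : ℝ × ℝ =>
      ∫ z in p.2..p.1, ∫ s in (0:ℝ)..p.2, ∫ τ in z..(z + p.2 - s),
        f ((τ - s) / 2) (z - (τ + s) / 2) * H τ s := by
    refine contParam (F := fun (p : ℝ × ℝ) z => ∫ s in (0:ℝ)..p.2, ∫ τ in z..(z + p.2 - s),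
        f ((τ - s) / 2) (z - (τ + s) / 2) * H τ s) ?_ continuous_snd continuous_fst
    have h2 := (B3_cont hfc hH).comp
      (show Continuous fun q : (ℝ × ℝ) × ℝ => (q.1.2, q.2) by fun_prop)
    simp only [Function.comp_def] at h2; exact h2
  have T4 : Continuous fun p : ℝ × ℝ =>
      ∫ z in (0:ℝ)..p.2, ∫ s in (0:ℝ)..z, ∫ τ in z..(2 * z - s),
        f ((τ - s) / 2) (z - (τ + s) / 2) * H τ s :=
    contParam (F := fun (_ : ℝ × ℝ) z => ∫ s in (0:ℝ)..z, ∫ τ in z..(2 * z - s),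
        f ((τ - s) / 2) (z - (τ + s) / 2) * H τ s)
      (by have h2 := (B4_cont hfc hH).comp
            (continuous_snd : Continuous fun q : (ℝ × ℝ) × ℝ => q.2)
          simp only [Function.comp_def] at h2; exact h2) continuous_const continuous_snd
  unfold PhiOp
  exact (((continuous_const.mul T1).add (continuous_const.mul T2)).add
    (continuous_const.mul T3)).add (continuous_const.mul T4)

lemma gzero_cont (hfc : Continuous fun q : ℝ × ℝ => f q.1 q.2) :
    Continuous fun p : ℝ × ℝ => Gzero lam0 f p.1 p.2 := by
  have hpair : Continuous fun p : ℝ × ℝ => ((p.1 + p.2) / 2, (p.1 - p.2) / 2) := by fun_prop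
  have hg : Continuous fun p : ℝ × ℝ => f ((p.1 + p.2) / 2) ((p.1 - p.2) / 2) :=
    hfc.comp hpair
  have inner1 : Continuous fun r : (ℝ × ℝ) × ℝ =>
      ∫ s in (0:ℝ)..r.1.2, f ((r.2 + s) / 2) ((r.2 - s) / 2) := by
    refine contParam (F := fun (r : (ℝ × ℝ) × ℝ) s => f ((r.2 + s) / 2) ((r.2 - s) / 2))
      ?_ continuous_const (by fun_prop)
    exact hg.comp (show Continuous fun q : ((ℝ × ℝ) × ℝ) × ℝ => (q.1.2, q.2) by fun_prop)
  have T1 : Continuous fun p : ℝ × ℝ =>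
      ∫ τ in p.2..p.1, ∫ s in (0:ℝ)..p.2, f ((τ + s) / 2) ((τ - s) / 2) :=
    contParam (F := fun (p : ℝ × ℝ) τ => ∫ s in (0:ℝ)..p.2, f ((τ + s) / 2) ((τ - s) / 2))
      inner1 continuous_snd continuous_fst
  have inner2 : Continuous fun τ : ℝ => ∫ s in (0:ℝ)..τ, f ((τ + s) / 2) ((τ - s) / 2) :=
    contParam (F := fun (τ : ℝ) s => f ((τ + s) / 2) ((τ - s) / 2)) hg
      continuous_const continuous_id
  have T2 : Continuous fun p : ℝ × ℝ =>
      ∫ τ in (0:ℝ)..p.2, ∫ s in (0:ℝ)..τ, f ((τ + s) / 2) ((τ - s) / 2) :=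
    contParam (F := fun (_ : ℝ × ℝ) τ => ∫ s in (0:ℝ)..τ, f ((τ + s) / 2) ((τ - s) / 2))
      (by have h2 := inner2.comp (continuous_snd : Continuous fun q : (ℝ × ℝ) × ℝ => q.2)
          simp only [Function.comp_def] at h2; exact h2) continuous_const continuous_snd
  unfold Gzero
  exact (((continuous_const.mul (by fun_prop)).add (continuous_const.mul T1)).add
    (continuous_const.mul T2))

end Cont

section Congr
lemma phi_congr {c c' : ℝ → ℝ} {lam0 : ℝ} {f H H' : ℝ → ℝ → ℝ}
    (hcc : ∀ x ∈ Set.Icc (0:ℝ) 1, c x = c' x)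
    (hHH : ∀ τ s : ℝ, (τ, s) ∈ Eset → H τ s = H' τ s)
    {ξ η : ℝ} (hq : (ξ, η) ∈ Eset) :
    PhiOp c lam0 f H ξ η = PhiOp c' lam0 f H' ξ η := by
  obtain ⟨h1, h2, h3, h4⟩ := hq
  simp only at h1 h2 h3 h4
  have e1 : (∫ τ in η..ξ, ∫ s in (0:ℝ)..η, muT c lam0 τ s * H τ s)
      = ∫ τ in η..ξ, ∫ s in (0:ℝ)..η, muT c' lam0 τ s * H' τ s := by
    apply intervalIntegral.integral_congr
    intro τ hτ; rw [Set.uIcc_of_le h3] at hτ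
    apply intervalIntegral.integral_congr
    intro s hs; rw [Set.uIcc_of_le h1] at hs
    beta_reduce
    have em : muT c lam0 τ s = muT c' lam0 τ s := by
      unfold muT
      rw [hcc ((τ + s) / 2) ⟨by cases hτ; cases hs; linarith, by cases hτ; cases hs; linarith⟩,
        hcc ((τ - s) / 2) ⟨by cases hτ; cases hs; linarith, by cases hτ; cases hs; linarith⟩]
    rw [em, hHH τ s (mem_Eset.2 ⟨hs.1, by cases hτ; cases hs; linarith,
      by cases hτ; cases hs; linarith, by cases hτ; cases hs; linarith⟩)]
  have e2 : (∫ τ in (0:ℝ)..η, ∫ s in (0:ℝ)..τ, muT c lam0 τ s * H τ s)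
      = ∫ τ in (0:ℝ)..η, ∫ s in (0:ℝ)..τ, muT c' lam0 τ s * H' τ s := by
    apply intervalIntegral.integral_congr
    intro τ hτ; rw [Set.uIcc_of_le h1] at hτ
    apply intervalIntegral.integral_congr
    intro s hs; rw [Set.uIcc_of_le hτ.1] at hs
    beta_reduce
    have em : muT c lam0 τ s = muT c' lam0 τ s := by
      unfold muT
      rw [hcc ((τ + s) / 2) ⟨by cases hτ; cases hs; linarith, by cases hτ; cases hs; linarith⟩,
        hcc ((τ - s) / 2) ⟨by cases hτ; cases hs; linarith, by cases hτ; cases hs; linarith⟩]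
    rw [em, hHH τ s (mem_Eset.2 ⟨hs.1, by cases hτ; cases hs; linarith,
      by cases hτ; cases hs; linarith, by cases hτ; cases hs; linarith⟩)]
  have e3 : (∫ z in η..ξ, ∫ s in (0:ℝ)..η, ∫ τ in z..(z + η - s),
        f ((τ - s) / 2) (z - (τ + s) / 2) * H τ s)
      = ∫ z in η..ξ, ∫ s in (0:ℝ)..η, ∫ τ in z..(z + η - s),
        f ((τ - s) / 2) (z - (τ + s) / 2) * H' τ s := by
    apply intervalIntegral.integral_congr
    intro z hz; rw [Set.uIcc_of_le h3] at hz
    apply intervalIntegral.integral_congr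
    intro s hs; rw [Set.uIcc_of_le h1] at hs
    apply intervalIntegral.integral_congr
    intro τ hτ
    rw [Set.uIcc_of_le (by cases hz; cases hs; linarith : z ≤ z + η - s)] at hτ
    beta_reduce
    rw [hHH τ s (mem_Eset.2 ⟨hs.1, by cases hz; cases hs; cases hτ; linarith,
      by cases hz; cases hs; cases hτ; linarith, by cases hz; cases hs; cases hτ; linarith⟩)]
  have e4 : (∫ z in (0:ℝ)..η, ∫ s in (0:ℝ)..z, ∫ τ in z..(2 * z - s),
        f ((τ - s) / 2) (z - (τ + s) / 2) * H τ s)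
      = ∫ z in (0:ℝ)..η, ∫ s in (0:ℝ)..z, ∫ τ in z..(2 * z - s),
        f ((τ - s) / 2) (z - (τ + s) / 2) * H' τ s := by
    apply intervalIntegral.integral_congr
    intro z hz; rw [Set.uIcc_of_le h1] at hz
    apply intervalIntegral.integral_congr
    intro s hs; rw [Set.uIcc_of_le hz.1] at hs
    apply intervalIntegral.integral_congr
    intro τ hτ
    rw [Set.uIcc_of_le (by cases hz; cases hs; linarith : z ≤ 2 * z - s)] at hτ
    beta_reduce
    rw [hHH τ s (mem_Eset.2 ⟨hs.1, by cases hz; cases hs; cases hτ; linarith,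
      by cases hz; cases hs; cases hτ; linarith, by cases hz; cases hs; cases hτ; linarith⟩)]
  unfold PhiOp
  rw [e1, e2, e3, e4]

end Congr

section Sub
variable {c : ℝ → ℝ} {lam0 : ℝ} {f : ℝ → ℝ → ℝ}

lemma phi_sub (hc : Continuous c) (hfc : Continuous fun q : ℝ × ℝ => f q.1 q.2)
    {H1 H2 : ℝ → ℝ → ℝ} (h1c : Continuous fun q : ℝ × ℝ => H1 q.1 q.2)
    (h2c : Continuous fun q : ℝ × ℝ => H2 q.1 q.2) (ξ η : ℝ) :
    PhiOp c lam0 f (fun a b => H1 a b - H2 a b) ξ η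
      = PhiOp c lam0 f H1 ξ η - PhiOp c lam0 f H2 ξ η := by
  have hg1 : Continuous (Function.uncurry fun τ s : ℝ => muT c lam0 τ s * H1 τ s) :=
    g1_cont hc h1c
  have hg2 : Continuous (Function.uncurry fun τ s : ℝ => muT c lam0 τ s * H2 τ s) :=
    g1_cont hc h2c
  have e1 : (∫ τ in η..ξ, ∫ s in (0:ℝ)..η, muT c lam0 τ s * (H1 τ s - H2 τ s))
      = (∫ τ in η..ξ, ∫ s in (0:ℝ)..η, muT c lam0 τ s * H1 τ s)
        - ∫ τ in η..ξ, ∫ s in (0:ℝ)..η, muT c lam0 τ s * H2 τ s := by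
    have inner : ∀ τ : ℝ, (∫ s in (0:ℝ)..η, muT c lam0 τ s * (H1 τ s - H2 τ s))
        = (∫ s in (0:ℝ)..η, muT c lam0 τ s * H1 τ s)
          - ∫ s in (0:ℝ)..η, muT c lam0 τ s * H2 τ s := by
      intro τ
      simp only [mul_sub]
      exact intervalIntegral.integral_sub ((hg1.uncurry_left τ).intervalIntegrable _ _)
        ((hg2.uncurry_left τ).intervalIntegrable _ _)
    simp only [inner]
    exact intervalIntegral.integral_sub ((I1_cont hc h1c η).intervalIntegrable _ _)
      ((I1_cont hc h2c η).intervalIntegrable _ _)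
  have e2 : (∫ τ in (0:ℝ)..η, ∫ s in (0:ℝ)..τ, muT c lam0 τ s * (H1 τ s - H2 τ s))
      = (∫ τ in (0:ℝ)..η, ∫ s in (0:ℝ)..τ, muT c lam0 τ s * H1 τ s)
        - ∫ τ in (0:ℝ)..η, ∫ s in (0:ℝ)..τ, muT c lam0 τ s * H2 τ s := by
    have inner : ∀ τ : ℝ, (∫ s in (0:ℝ)..τ, muT c lam0 τ s * (H1 τ s - H2 τ s))
        = (∫ s in (0:ℝ)..τ, muT c lam0 τ s * H1 τ s)
          - ∫ s in (0:ℝ)..τ, muT c lam0 τ s * H2 τ s := by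
      intro τ
      simp only [mul_sub]
      exact intervalIntegral.integral_sub ((hg1.uncurry_left τ).intervalIntegrable _ _)
        ((hg2.uncurry_left τ).intervalIntegrable _ _)
    simp only [inner]
    exact intervalIntegral.integral_sub ((I2_cont hc h1c).intervalIntegrable _ _)
      ((I2_cont hc h2c).intervalIntegrable _ _)
  have hfh1 : ∀ z s : ℝ, Continuous fun τ : ℝ =>
      f ((τ - s) / 2) (z - (τ + s) / 2) * H1 τ s := fun z s =>
    fhat_cont hfc h1c (u := fun _ : ℝ => z) (v := fun _ => s) (w := fun τ => τ)
      continuous_const continuous_const continuous_id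
  have hfh2 : ∀ z s : ℝ, Continuous fun τ : ℝ =>
      f ((τ - s) / 2) (z - (τ + s) / 2) * H2 τ s := fun z s =>
    fhat_cont hfc h2c (u := fun _ : ℝ => z) (v := fun _ => s) (w := fun τ => τ)
      continuous_const continuous_const continuous_id
  -- mid-level continuity for T3, fixed z : s ↦ ∫ τ in z..(z+η-s), ...
  have hmid3 : ∀ (H : ℝ → ℝ → ℝ), (Continuous fun q : ℝ × ℝ => H q.1 q.2) → ∀ z : ℝ,
      Continuous fun s : ℝ => ∫ τ in z..(z + η - s),
        f ((τ - s) / 2) (z - (τ + s) / 2) * H τ s := by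
    intro H hHc z
    have h2 := (A3_cont hfc hHc).comp
      (show Continuous fun s : ℝ => (η, z, s) by fun_prop)
    simp only [Function.comp_def] at h2; exact h2
  have hmid4 : ∀ (H : ℝ → ℝ → ℝ), (Continuous fun q : ℝ × ℝ => H q.1 q.2) → ∀ z : ℝ,
      Continuous fun s : ℝ => ∫ τ in z..(2 * z - s),
        f ((τ - s) / 2) (z - (τ + s) / 2) * H τ s := by
    intro H hHc z
    have h2 := (A4_cont hfc hHc).comp
      (show Continuous fun s : ℝ => (z, s) by fun_prop)
    simp only [Function.comp_def] at h2; exact h2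
  have hout3 : ∀ (H : ℝ → ℝ → ℝ), (Continuous fun q : ℝ × ℝ => H q.1 q.2) →
      Continuous fun z : ℝ => ∫ s in (0:ℝ)..η, ∫ τ in z..(z + η - s),
        f ((τ - s) / 2) (z - (τ + s) / 2) * H τ s := by
    intro H hHc
    have h2 := (B3_cont hfc hHc).comp
      (show Continuous fun z : ℝ => (η, z) by fun_prop)
    simp only [Function.comp_def] at h2; exact h2
  have e3 : (∫ z in η..ξ, ∫ s in (0:ℝ)..η, ∫ τ in z..(z + η - s),
        f ((τ - s) / 2) (z - (τ + s) / 2) * (H1 τ s - H2 τ s))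
      = (∫ z in η..ξ, ∫ s in (0:ℝ)..η, ∫ τ in z..(z + η - s),
        f ((τ - s) / 2) (z - (τ + s) / 2) * H1 τ s)
        - ∫ z in η..ξ, ∫ s in (0:ℝ)..η, ∫ τ in z..(z + η - s),
        f ((τ - s) / 2) (z - (τ + s) / 2) * H2 τ s := by
    have inner : ∀ z s : ℝ, (∫ τ in z..(z + η - s),
        f ((τ - s) / 2) (z - (τ + s) / 2) * (H1 τ s - H2 τ s))
        = (∫ τ in z..(z + η - s), f ((τ - s) / 2) (z - (τ + s) / 2) * H1 τ s)
          - ∫ τ in z..(z + η - s), f ((τ - s) / 2) (z - (τ + s) / 2) * H2 τ s := by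
      intro z s
      simp only [mul_sub]
      exact intervalIntegral.integral_sub ((hfh1 z s).intervalIntegrable _ _)
        ((hfh2 z s).intervalIntegrable _ _)
    simp only [inner]
    have mid : ∀ z : ℝ, (∫ s in (0:ℝ)..η,
        ((∫ τ in z..(z + η - s), f ((τ - s) / 2) (z - (τ + s) / 2) * H1 τ s)
          - ∫ τ in z..(z + η - s), f ((τ - s) / 2) (z - (τ + s) / 2) * H2 τ s))
        = (∫ s in (0:ℝ)..η, ∫ τ in z..(z + η - s),
            f ((τ - s) / 2) (z - (τ + s) / 2) * H1 τ s)
          - ∫ s in (0:ℝ)..η, ∫ τ in z..(z + η - s),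
            f ((τ - s) / 2) (z - (τ + s) / 2) * H2 τ s := by
      intro z
      exact intervalIntegral.integral_sub ((hmid3 H1 h1c z).intervalIntegrable _ _)
        ((hmid3 H2 h2c z).intervalIntegrable _ _)
    simp only [mid]
    exact intervalIntegral.integral_sub ((hout3 H1 h1c).intervalIntegrable _ _)
      ((hout3 H2 h2c).intervalIntegrable _ _)
  have e4 : (∫ z in (0:ℝ)..η, ∫ s in (0:ℝ)..z, ∫ τ in z..(2 * z - s),
        f ((τ - s) / 2) (z - (τ + s) / 2) * (H1 τ s - H2 τ s))
      = (∫ z in (0:ℝ)..η, ∫ s in (0:ℝ)..z, ∫ τ in z..(2 * z - s),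
        f ((τ - s) / 2) (z - (τ + s) / 2) * H1 τ s)
        - ∫ z in (0:ℝ)..η, ∫ s in (0:ℝ)..z, ∫ τ in z..(2 * z - s),
        f ((τ - s) / 2) (z - (τ + s) / 2) * H2 τ s := by
    have inner : ∀ z s : ℝ, (∫ τ in z..(2 * z - s),
        f ((τ - s) / 2) (z - (τ + s) / 2) * (H1 τ s - H2 τ s))
        = (∫ τ in z..(2 * z - s), f ((τ - s) / 2) (z - (τ + s) / 2) * H1 τ s)
          - ∫ τ in z..(2 * z - s), f ((τ - s) / 2) (z - (τ + s) / 2) * H2 τ s := by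
      intro z s
      simp only [mul_sub]
      exact intervalIntegral.integral_sub ((hfh1 z s).intervalIntegrable _ _)
        ((hfh2 z s).intervalIntegrable _ _)
    simp only [inner]
    have mid : ∀ z : ℝ, (∫ s in (0:ℝ)..z,
        ((∫ τ in z..(2 * z - s), f ((τ - s) / 2) (z - (τ + s) / 2) * H1 τ s)
          - ∫ τ in z..(2 * z - s), f ((τ - s) / 2) (z - (τ + s) / 2) * H2 τ s))
        = (∫ s in (0:ℝ)..z, ∫ τ in z..(2 * z - s),
            f ((τ - s) / 2) (z - (τ + s) / 2) * H1 τ s)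
          - ∫ s in (0:ℝ)..z, ∫ τ in z..(2 * z - s),
            f ((τ - s) / 2) (z - (τ + s) / 2) * H2 τ s := by
      intro z
      exact intervalIntegral.integral_sub ((hmid4 H1 h1c z).intervalIntegrable _ _)
        ((hmid4 H2 h2c z).intervalIntegrable _ _)
    simp only [mid]
    exact intervalIntegral.integral_sub ((B4_cont hfc h1c).intervalIntegrable _ _)
      ((B4_cont hfc h2c).intervalIntegrable _ _)
  unfold PhiOp
  beta_reduce
  rw [e1, e2, e3, e4]
  ring
end Sub

section BoundHelpers

lemma innerA {V : ℝ → ℝ} {q a b h : ℝ} (hab : a ≤ b) (hV : Continuous V) (hq : 0 ≤ q)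
    (hh : 0 ≤ h + a) (m : ℕ) (hb : ∀ x ∈ Set.Icc a b, |V x| ≤ q * (h + x) ^ m) :
    |∫ x in a..b, V x| ≤ q / ((m:ℝ) + 1) * (h + b) ^ (m + 1) := by
  calc |∫ x in a..b, V x| ≤ ∫ x in a..b, q * (h + x) ^ m :=
        absint hab hV (by fun_prop) hb
    _ = q * (((h + b) ^ (m + 1) - (h + a) ^ (m + 1)) / ((m:ℝ) + 1)) := by
        rw [intervalIntegral.integral_const_mul, ipow2]
    _ ≤ q / ((m:ℝ) + 1) * (h + b) ^ (m + 1) := by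
        have h5 : (0:ℝ) ≤ (h + a) ^ (m + 1) := pow_nonneg hh _
        have e : q / ((m:ℝ) + 1) * (h + b) ^ (m + 1)
            = q * ((h + b) ^ (m + 1) / ((m:ℝ) + 1)) := by ring
        rw [e]
        gcongr
        linarith

lemma midConst {V : ℝ → ℝ} {C η : ℝ} (h1 : 0 ≤ η) (h2 : η ≤ 1) (hV : Continuous V)
    (hC : 0 ≤ C) (hb : ∀ s ∈ Set.Icc 0 η, |V s| ≤ C) : |∫ s in (0:ℝ)..η, V s| ≤ C := by
  have := absint h1 hV continuous_const hb
  rw [intervalIntegral.integral_const, smul_eq_mul, sub_zero] at this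
  nlinarith

lemma outerA {W : ℝ → ℝ} {q η ξ : ℝ} (h1 : 0 ≤ η) (h3 : η ≤ ξ) (hW : Continuous W)
    (hq : 0 ≤ q) (m : ℕ) (hb : ∀ τ ∈ Set.Icc η ξ, |W τ| ≤ q / ((m:ℝ) + 1) * (τ + η) ^ (m + 1)) :
    |∫ τ in η..ξ, W τ| ≤ q * (ξ + η) ^ (m + 2) / (((m:ℝ) + 1) * ((m:ℝ) + 2)) := by
  have hq1 : 0 ≤ q / ((m:ℝ) + 1) := div_nonneg hq (by positivity)
  calc |∫ τ in η..ξ, W τ| ≤ ∫ τ in η..ξ, q / ((m:ℝ) + 1) * (τ + η) ^ (m + 1) :=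
        absint h3 hW (by fun_prop) hb
    _ = q / ((m:ℝ) + 1) * ((ξ + η) ^ (m + 2) - (η + η) ^ (m + 2)) / ((m:ℝ) + 2) := by
        rw [intervalIntegral.integral_const_mul, ipow]
        push_cast; ring
    _ ≤ q * (ξ + η) ^ (m + 2) / (((m:ℝ) + 1) * ((m:ℝ) + 2)) := by
        have h5 : (0:ℝ) ≤ (η + η) ^ (m + 2) := pow_nonneg (by linarith) _
        have e : q * (ξ + η) ^ (m + 2) / (((m:ℝ) + 1) * ((m:ℝ) + 2))
            = q / ((m:ℝ) + 1) * (ξ + η) ^ (m + 2) / ((m:ℝ) + 2) := by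
          rw [div_mul_eq_mul_div, div_div]
        rw [e]
        gcongr ?_ / _
        exact mul_le_mul_of_nonneg_left (by linarith) hq1

lemma outerB {W : ℝ → ℝ} {q η : ℝ} (h1 : 0 ≤ η) (hW : Continuous W)
    (hq : 0 ≤ q) (m : ℕ) (hb : ∀ τ ∈ Set.Icc 0 η, |W τ| ≤ q / ((m:ℝ) + 1) * τ ^ (m + 1)) :
    |∫ τ in (0:ℝ)..η, W τ| ≤ q * η ^ (m + 2) / (((m:ℝ) + 1) * ((m:ℝ) + 2)) := by
  calc |∫ τ in (0:ℝ)..η, W τ| ≤ ∫ τ in (0:ℝ)..η, q / ((m:ℝ) + 1) * τ ^ (m + 1) :=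
        absint h1 hW (by fun_prop) hb
    _ = q / ((m:ℝ) + 1) * (η ^ (m + 2) - 0 ^ (m + 2)) / ((m:ℝ) + 2) := by
        rw [intervalIntegral.integral_const_mul, integral_pow]
        push_cast; ring
    _ ≤ q * η ^ (m + 2) / (((m:ℝ) + 1) * ((m:ℝ) + 2)) := by
        rw [zero_pow (by omega : m + 2 ≠ 0), sub_zero]
        apply le_of_eq
        rw [div_mul_eq_mul_div, div_div]

lemma abs_comb (a b c d : ℝ) :
    |1 / 4 * a + 1 / 2 * b + 1 / 4 * c + 1 / 2 * d|
      ≤ 1 / 4 * |a| + 1 / 2 * |b| + 1 / 4 * |c| + 1 / 2 * |d| := by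
  have e1 : |1 / 4 * a| = 1 / 4 * |a| := by rw [abs_mul]; norm_num
  have e2 : |1 / 2 * b| = 1 / 2 * |b| := by rw [abs_mul]; norm_num
  have e3 : |1 / 4 * c| = 1 / 4 * |c| := by rw [abs_mul]; norm_num
  have e4 : |1 / 2 * d| = 1 / 2 * |d| := by rw [abs_mul]; norm_num
  have t1 := abs_add_le (1 / 4 * a + 1 / 2 * b + 1 / 4 * c) (1 / 2 * d)
  have t2 := abs_add_le (1 / 4 * a + 1 / 2 * b) (1 / 4 * c)
  have t3 := abs_add_le (1 / 4 * a) (1 / 2 * b)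
  linarith

end BoundHelpers

section Bound
variable {c : ℝ → ℝ} {lam0 : ℝ} {f H : ℝ → ℝ → ℝ}

lemma phi_bound (hc : Continuous c) (hfc : Continuous fun q : ℝ × ℝ => f q.1 q.2)
    (hH : Continuous fun q : ℝ × ℝ => H q.1 q.2)
    {lam1 fbar A : ℝ} (hA : 0 ≤ A) (hlam1 : 0 ≤ lam1) (hfbar : 0 ≤ fbar)
    (hmub : ∀ τ s : ℝ, |muT c lam0 τ s| ≤ lam1)
    (hfb : ∀ x y : ℝ, |f x y| ≤ fbar)
    (m : ℕ)
    (hHb : ∀ τ s : ℝ, (τ, s) ∈ Eset → |H τ s| ≤ A / (m.factorial : ℝ) * (τ + s) ^ m)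
    {ξ η : ℝ} (hq : (ξ, η) ∈ Eset) :
    |PhiOp c lam0 f H ξ η|
      ≤ (lam1 + fbar) / 2 * A / ((m + 2).factorial : ℝ) * (ξ + η) ^ (m + 2) := by
  obtain ⟨h1, h2, h3, h4⟩ := hq
  simp only at h1 h2 h3 h4
  have hξ0 : 0 ≤ ξ := le_trans h1 h3
  have hfm : (0:ℝ) < (m.factorial : ℝ) := by exact_mod_cast m.factorial_pos
  have hm1 : (0:ℝ) < (m:ℝ) + 1 := by positivity
  have hm2 : (0:ℝ) < (m:ℝ) + 2 := by positivity
  set c0 : ℝ := A / (m.factorial : ℝ) with hc0def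
  have hc0 : 0 ≤ c0 := by positivity
  have hP0 : (0:ℝ) ≤ (ξ + η) ^ (m + 2) := pow_nonneg (by linarith) _
  have h2pow : ((2:ℝ)) ^ (m + 1) * η ^ (m + 2) ≤ (ξ + η) ^ (m + 2) / 2 := by
    have hpow2 : (2 * η) ^ (m + 2) ≤ (ξ + η) ^ (m + 2) :=
      pow_le_pow_left₀ (by linarith) (by linarith) _
    have e : (2 * η) ^ (m + 2) = 2 * (2 ^ (m + 1) * η ^ (m + 2)) := by
      rw [mul_pow, pow_succ' (2:ℝ) (m + 1)]; ring
    nlinarith []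
  -- ===================== T1 =====================
  have hbT1 : |∫ τ in η..ξ, ∫ s in (0:ℝ)..η, muT c lam0 τ s * H τ s|
      ≤ lam1 * c0 * (ξ + η) ^ (m + 2) / (((m:ℝ) + 1) * ((m:ℝ) + 2)) := by
    apply outerA h1 h3 (I1_cont hc hH η) (mul_nonneg hlam1 hc0) m
    intro τ hτ
    apply innerA h1 ((g1_cont (lam0 := lam0) hc hH).uncurry_left τ)
      (mul_nonneg hlam1 hc0) (by simpa using le_trans h1 hτ.1) m
    intro s hs
    have hmem : (τ, s) ∈ Eset := mem_Eset.2
      ⟨hs.1, by linarith [hs.2], by linarith [hs.2, hτ.1], by linarith [hs.2, hτ.2]⟩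
    calc |muT c lam0 τ s * H τ s| = |muT c lam0 τ s| * |H τ s| := abs_mul _ _
      _ ≤ lam1 * (c0 * (τ + s) ^ m) :=
        mul_le_mul (hmub τ s) (hHb τ s hmem) (abs_nonneg _) hlam1
      _ = lam1 * c0 * (τ + s) ^ m := by ring
  -- ===================== T2 =====================
  have hbT2 : |∫ τ in (0:ℝ)..η, ∫ s in (0:ℝ)..τ, muT c lam0 τ s * H τ s|
      ≤ lam1 * c0 * 2 ^ (m + 1) * η ^ (m + 2) / (((m:ℝ) + 1) * ((m:ℝ) + 2)) := by
    apply outerB h1 (I2_cont (lam0 := lam0) hc hH)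
      (mul_nonneg (mul_nonneg hlam1 hc0) (by positivity : (0:ℝ) ≤ 2 ^ (m + 1))) m
    intro τ hτ
    have key : |∫ s in (0:ℝ)..τ, muT c lam0 τ s * H τ s|
        ≤ lam1 * c0 / ((m:ℝ) + 1) * (τ + τ) ^ (m + 1) := by
      apply innerA hτ.1 ((g1_cont (lam0 := lam0) hc hH).uncurry_left τ)
        (mul_nonneg hlam1 hc0) (by simpa using hτ.1) m
      intro s hs
      have hmem : (τ, s) ∈ Eset := mem_Eset.2
        ⟨hs.1, by linarith [hs.2, hτ.2], by linarith [hs.2], by linarith [hs.2, hτ.2]⟩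
      calc |muT c lam0 τ s * H τ s| = |muT c lam0 τ s| * |H τ s| := abs_mul _ _
        _ ≤ lam1 * (c0 * (τ + s) ^ m) :=
          mul_le_mul (hmub τ s) (hHb τ s hmem) (abs_nonneg _) hlam1
        _ = lam1 * c0 * (τ + s) ^ m := by ring
    have e : lam1 * c0 / ((m:ℝ) + 1) * (τ + τ) ^ (m + 1)
        = lam1 * c0 * 2 ^ (m + 1) / ((m:ℝ) + 1) * τ ^ (m + 1) := by
      rw [show τ + τ = 2 * τ by ring, mul_pow]; ring
    rw [e] at key
    exact key
  -- ===================== T3 =====================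
  have hbT3 : |∫ z in η..ξ, ∫ s in (0:ℝ)..η, ∫ τ in z..(z + η - s),
        f ((τ - s) / 2) (z - (τ + s) / 2) * H τ s|
      ≤ fbar * c0 * (ξ + η) ^ (m + 2) / (((m:ℝ) + 1) * ((m:ℝ) + 2)) := by
    have hout3 : Continuous fun z : ℝ => ∫ s in (0:ℝ)..η, ∫ τ in z..(z + η - s),
        f ((τ - s) / 2) (z - (τ + s) / 2) * H τ s := by
      have h2' := (B3_cont hfc hH).comp (show Continuous fun z : ℝ => (η, z) by fun_prop)
      simp only [Function.comp_def] at h2'; exact h2'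
    apply outerA h1 h3 hout3 (mul_nonneg hfbar hc0) m
    intro z hz
    have hmid : Continuous fun s : ℝ => ∫ τ in z..(z + η - s),
        f ((τ - s) / 2) (z - (τ + s) / 2) * H τ s := by
      have h2' := (A3_cont hfc hH).comp (show Continuous fun s : ℝ => (η, z, s) by fun_prop)
      simp only [Function.comp_def] at h2'; exact h2'
    have hz0 : 0 ≤ z := le_trans h1 hz.1
    have hbase : (0:ℝ) ≤ z + η := by linarith
    apply midConst h1 h2 hmid
      (mul_nonneg (div_nonneg (mul_nonneg hfbar hc0) hm1.le) (pow_nonneg hbase _))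
    intro s hs
    have key : |∫ τ in z..(z + η - s), f ((τ - s) / 2) (z - (τ + s) / 2) * H τ s|
        ≤ fbar * c0 / ((m:ℝ) + 1) * (s + (z + η - s)) ^ (m + 1) := by
      apply innerA (by linarith [hs.2] : z ≤ z + η - s)
        (fhat_cont hfc hH (u := fun _ : ℝ => z) (v := fun _ => s) (w := fun τ => τ)
          continuous_const continuous_const continuous_id)
        (mul_nonneg hfbar hc0) (by linarith [hs.1]) m
      intro τ hτ
      have hmem : (τ, s) ∈ Eset := mem_Eset.2
        ⟨hs.1, by linarith [hs.2], by linarith [hs.2, hτ.1, hz.1],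
          by linarith [hτ.2, hz.2]⟩
      calc |f ((τ - s) / 2) (z - (τ + s) / 2) * H τ s|
          = |f ((τ - s) / 2) (z - (τ + s) / 2)| * |H τ s| := abs_mul _ _
        _ ≤ fbar * (c0 * (τ + s) ^ m) :=
          mul_le_mul (hfb _ _) (hHb τ s hmem) (abs_nonneg _) hfbar
        _ = fbar * c0 * (s + τ) ^ m := by ring
    rw [show s + (z + η - s) = z + η by ring] at key
    exact key
  -- ===================== T4 =====================
  have hbT4 : |∫ z in (0:ℝ)..η, ∫ s in (0:ℝ)..z, ∫ τ in z..(2 * z - s),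
        f ((τ - s) / 2) (z - (τ + s) / 2) * H τ s|
      ≤ fbar * c0 * 2 ^ (m + 1) * η ^ (m + 2) / (((m:ℝ) + 1) * ((m:ℝ) + 2)) := by
    apply outerB h1 (B4_cont hfc hH)
      (mul_nonneg (mul_nonneg hfbar hc0) (by positivity : (0:ℝ) ≤ 2 ^ (m + 1))) m
    intro z hz
    have hmid : Continuous fun s : ℝ => ∫ τ in z..(2 * z - s),
        f ((τ - s) / 2) (z - (τ + s) / 2) * H τ s := by
      have h2' := (A4_cont hfc hH).comp (show Continuous fun s : ℝ => (z, s) by fun_prop)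
      simp only [Function.comp_def] at h2'; exact h2'
    have hz1 : z ≤ 1 := le_trans hz.2 h2
    apply midConst hz.1 hz1 hmid
      (mul_nonneg (div_nonneg (mul_nonneg (mul_nonneg hfbar hc0)
        (by positivity : (0:ℝ) ≤ 2 ^ (m + 1))) hm1.le) (pow_nonneg hz.1 _))
    intro s hs
    have key : |∫ τ in z..(2 * z - s), f ((τ - s) / 2) (z - (τ + s) / 2) * H τ s|
        ≤ fbar * c0 / ((m:ℝ) + 1) * (s + (2 * z - s)) ^ (m + 1) := by
      apply innerA (by linarith [hs.2] : z ≤ 2 * z - s)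
        (fhat_cont hfc hH (u := fun _ : ℝ => z) (v := fun _ => s) (w := fun τ => τ)
          continuous_const continuous_const continuous_id)
        (mul_nonneg hfbar hc0) (by linarith [hs.1, hz.1]) m
      intro τ hτ
      have hmem : (τ, s) ∈ Eset := mem_Eset.2
        ⟨hs.1, by linarith [hs.2, hz.2], by linarith [hs.2, hτ.1],
          by linarith [hτ.2, hz.2]⟩
      calc |f ((τ - s) / 2) (z - (τ + s) / 2) * H τ s|
          = |f ((τ - s) / 2) (z - (τ + s) / 2)| * |H τ s| := abs_mul _ _
        _ ≤ fbar * (c0 * (τ + s) ^ m) :=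
          mul_le_mul (hfb _ _) (hHb τ s hmem) (abs_nonneg _) hfbar
        _ = fbar * c0 * (s + τ) ^ m := by ring
    have e : fbar * c0 / ((m:ℝ) + 1) * (s + (2 * z - s)) ^ (m + 1)
        = fbar * c0 * 2 ^ (m + 1) / ((m:ℝ) + 1) * z ^ (m + 1) := by
      rw [show s + (2 * z - s) = 2 * z by ring, mul_pow]; ring
    rw [e] at key
    exact key
  -- ===================== combine =====================
  have hD : (0:ℝ) < ((m:ℝ) + 1) * ((m:ℝ) + 2) := by positivity
  have m2 : lam1 * c0 * 2 ^ (m + 1) * η ^ (m + 2) / (((m:ℝ) + 1) * ((m:ℝ) + 2))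
      ≤ lam1 * c0 * ((ξ + η) ^ (m + 2) / 2) / (((m:ℝ) + 1) * ((m:ℝ) + 2)) := by
    gcongr ?_ / _
    nlinarith [mul_le_mul_of_nonneg_left h2pow (mul_nonneg hlam1 hc0)]
  have m4 : fbar * c0 * 2 ^ (m + 1) * η ^ (m + 2) / (((m:ℝ) + 1) * ((m:ℝ) + 2))
      ≤ fbar * c0 * ((ξ + η) ^ (m + 2) / 2) / (((m:ℝ) + 1) * ((m:ℝ) + 2)) := by
    gcongr ?_ / _
    nlinarith [mul_le_mul_of_nonneg_left h2pow (mul_nonneg hfbar hc0)]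
  have hfact : (((m + 2).factorial : ℝ)) = (m.factorial : ℝ) * (((m:ℝ) + 1) * ((m:ℝ) + 2)) := by
    show ((Nat.factorial (m + 1 + 1) : ℝ)) = _
    rw [Nat.factorial_succ, Nat.factorial_succ]
    push_cast; ring
  have heq : 1 / 4 * (lam1 * c0 * (ξ + η) ^ (m + 2) / (((m:ℝ) + 1) * ((m:ℝ) + 2)))
      + 1 / 2 * (lam1 * c0 * ((ξ + η) ^ (m + 2) / 2) / (((m:ℝ) + 1) * ((m:ℝ) + 2)))
      + 1 / 4 * (fbar * c0 * (ξ + η) ^ (m + 2) / (((m:ℝ) + 1) * ((m:ℝ) + 2)))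
      + 1 / 2 * (fbar * c0 * ((ξ + η) ^ (m + 2) / 2) / (((m:ℝ) + 1) * ((m:ℝ) + 2)))
      = (lam1 + fbar) / 2 * A / ((m + 2).factorial : ℝ) * (ξ + η) ^ (m + 2) := by
    rw [hfact, hc0def]
    field_simp
    ring
  have main := abs_comb (∫ τ in η..ξ, ∫ s in (0:ℝ)..η, muT c lam0 τ s * H τ s)
    (∫ τ in (0:ℝ)..η, ∫ s in (0:ℝ)..τ, muT c lam0 τ s * H τ s)
    (∫ z in η..ξ, ∫ s in (0:ℝ)..η, ∫ τ in z..(z + η - s),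
        f ((τ - s) / 2) (z - (τ + s) / 2) * H τ s)
    (∫ z in (0:ℝ)..η, ∫ s in (0:ℝ)..z, ∫ τ in z..(2 * z - s),
        f ((τ - s) / 2) (z - (τ + s) / 2) * H τ s)
  unfold PhiOp
  linarith [main, hbT1, hbT2, hbT3, hbT4, m2, m4]
end Bound

section GzeroBound

lemma abs_comb3 (a b c : ℝ) :
    |a + 1 / 4 * b + 1 / 2 * c| ≤ |a| + 1 / 4 * |b| + 1 / 2 * |c| := by
  have e3 : |1 / 4 * b| = 1 / 4 * |b| := by rw [abs_mul]; norm_num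
  have e4 : |1 / 2 * c| = 1 / 2 * |c| := by rw [abs_mul]; norm_num
  have t1 := abs_add_le (a + 1 / 4 * b) (1 / 2 * c)
  have t2 := abs_add_le a (1 / 4 * b)
  linarith

lemma gzero_bound {lam0 : ℝ} {f : ℝ → ℝ → ℝ} (hfc : Continuous fun q : ℝ × ℝ => f q.1 q.2)
    {lam1 fbar : ℝ} (hl : |lam0| ≤ lam1) (hfbar : 0 ≤ fbar)
    (hfb : ∀ x y : ℝ, |f x y| ≤ fbar)
    {ξ η : ℝ} (hq : (ξ, η) ∈ Eset) :
    |Gzero lam0 f ξ η| ≤ (lam1 + fbar) / 4 * (ξ + η) := by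
  obtain ⟨h1, h2, h3, h4⟩ := hq
  simp only at h1 h2 h3 h4
  have hξ0 : 0 ≤ ξ := le_trans h1 h3
  have hlam1 : 0 ≤ lam1 := le_trans (abs_nonneg _) hl
  have hfin : ∀ τ : ℝ, Continuous fun s : ℝ => f ((τ + s) / 2) ((τ - s) / 2) := fun τ =>
    hfc.comp (show Continuous fun s : ℝ => ((τ + s) / 2, (τ - s) / 2) by fun_prop)
  have hfu : Continuous (Function.uncurry fun τ s : ℝ => f ((τ + s) / 2) ((τ - s) / 2)) :=
    hfc.comp (show Continuous fun q : ℝ × ℝ => ((q.1 + q.2) / 2, (q.1 - q.2) / 2) by fun_prop)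
  have hA : |lam0 / 4 * (ξ + η)| ≤ lam1 / 4 * (ξ + η) := by
    rw [abs_mul, abs_div, abs_of_nonneg (by linarith : (0:ℝ) ≤ ξ + η),
      (by norm_num : |(4:ℝ)| = 4)]
    gcongr
  have hB : |∫ τ in η..ξ, ∫ s in (0:ℝ)..η, f ((τ + s) / 2) ((τ - s) / 2)|
      ≤ (ξ - η) * (η * fbar) := by
    have step : |∫ τ in η..ξ, ∫ s in (0:ℝ)..η, f ((τ + s) / 2) ((τ - s) / 2)|
        ≤ ∫ τ in η..ξ, η * fbar := by
      apply absint h3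
        (intervalIntegral.continuous_parametric_intervalIntegral_of_continuous' hfu 0 η)
        continuous_const
      intro τ _
      have t := absint h1 (hfin τ) continuous_const (fun s _ => hfb _ _)
      rwa [intervalIntegral.integral_const, smul_eq_mul, sub_zero] at t
    rwa [intervalIntegral.integral_const, smul_eq_mul] at step
  have hC : |∫ τ in (0:ℝ)..η, ∫ s in (0:ℝ)..τ, f ((τ + s) / 2) ((τ - s) / 2)|
      ≤ fbar * (η ^ 2 / 2) := by
    have step : |∫ τ in (0:ℝ)..η, ∫ s in (0:ℝ)..τ, f ((τ + s) / 2) ((τ - s) / 2)|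
        ≤ ∫ τ in (0:ℝ)..η, fbar * τ := by
      apply absint h1
        (contParam (F := fun τ s : ℝ => f ((τ + s) / 2) ((τ - s) / 2)) hfu
          continuous_const continuous_id)
        (by fun_prop)
      intro τ hτ
      have t := absint hτ.1 (hfin τ) continuous_const (fun s _ => hfb _ _)
      rw [intervalIntegral.integral_const, smul_eq_mul, sub_zero] at t
      simp only [id_eq]
      beta_reduce
      linarith [t]
    have e : (∫ τ in (0:ℝ)..η, fbar * τ) = fbar * (η ^ 2 / 2) := by
      rw [intervalIntegral.integral_const_mul, integral_id]
      norm_num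
    rwa [e] at step
  have main := abs_comb3 (lam0 / 4 * (ξ + η))
    (∫ τ in η..ξ, ∫ s in (0:ℝ)..η, f ((τ + s) / 2) ((τ - s) / 2))
    (∫ τ in (0:ℝ)..η, ∫ s in (0:ℝ)..τ, f ((τ + s) / 2) ((τ - s) / 2))
  unfold Gzero
  have final : lam1 / 4 * (ξ + η) + 1 / 4 * ((ξ - η) * (η * fbar)) + 1 / 2 * (fbar * (η ^ 2 / 2))
      ≤ (lam1 + fbar) / 4 * (ξ + η) := by
    nlinarith [mul_nonneg hfbar h1, mul_nonneg hfbar hξ0,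
      mul_nonneg (mul_nonneg hfbar hξ0) (by linarith : (0:ℝ) ≤ 1 - η)]
  linarith [main, hA, hB, hC]

end GzeroBound

/-- successive approximations -/
noncomputable def Gseq (c : ℝ → ℝ) (lam0 : ℝ) (f : ℝ → ℝ → ℝ) : ℕ → ℝ → ℝ → ℝ
  | 0 => Gzero lam0 f
  | n + 1 => fun ξ η => Gzero lam0 f ξ η + PhiOp c lam0 f (Gseq c lam0 f n) ξ η

lemma Gseq_cont {c : ℝ → ℝ} {lam0 : ℝ} {f : ℝ → ℝ → ℝ} (hc : Continuous c)
    (hfc : Continuous fun q : ℝ × ℝ => f q.1 q.2) :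
    ∀ n, Continuous fun p : ℝ × ℝ => Gseq c lam0 f n p.1 p.2 := by
  intro n
  induction n with
  | zero => simp only [Gseq]; exact gzero_cont hfc
  | succ n ih =>
    simp only [Gseq]
    exact (gzero_cont hfc).add (phi_cont hc hfc ih)

theorem stmt14 (c1 : ℝ → ℝ) (lam0 : ℝ) (f : ℝ → ℝ → ℝ)
    (hc1 : ContDiffOn ℝ 1 c1 (Set.Icc 0 1))
    (hfc : Continuous (fun q : ℝ × ℝ => f q.1 q.2))
    (hfbdd : ∃ C : ℝ, ∀ x y : ℝ, |f x y| ≤ C)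
    -- the successive approximation sequence
    (G : ℕ → ℝ → ℝ → ℝ)
    (hG0 : ∀ ξ η : ℝ, G 0 ξ η = Gzero lam0 f ξ η)
    (hGrec : ∀ n : ℕ, ∀ ξ η : ℝ, G (n + 1) ξ η = Gzero lam0 f ξ η + PhiOp c1 lam0 f (G n) ξ η)
    -- the constants
    (fbar lam1 M : ℝ)
    (hfbar : fbar = sSup (Set.range fun q : ℝ × ℝ => |f q.1 q.2|))
    (hlam1 : lam1 = max |lam0|
      (sSup ((fun q : ℝ × ℝ => |lam0 - c1 q.1 + c1 q.2|) '' (Set.Icc 0 1 ×ˢ Set.Icc 0 1))))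
    (hM : M = (lam1 + fbar) / 2) :
    ∀ n : ℕ, ∀ ξ η : ℝ, (ξ, η) ∈ Eset →
      |G (n + 1) ξ η - G n ξ η| ≤ M ^ (n + 2) / (Nat.factorial (n + 1) : ℝ) * (ξ + η) ^ (n + 1) := by
  -- the clamped coefficient
  set c' : ℝ → ℝ := fun x => c1 (max 0 (min 1 x)) with hc'def
  have hproj : ∀ x : ℝ, max 0 (min 1 x) ∈ Set.Icc (0:ℝ) 1 := fun x =>
    ⟨le_max_left _ _, max_le (by norm_num) (min_le_left _ _)⟩
  have hc' : Continuous c' :=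
    (hc1.continuousOn).comp_continuous (by fun_prop) hproj
  have heqc : ∀ x ∈ Set.Icc (0:ℝ) 1, c1 x = c' x := by
    intro x hx
    rw [hc'def]
    simp only
    rw [min_eq_right hx.2, max_eq_right hx.1]
  -- bound for f
  obtain ⟨C, hC⟩ := hfbdd
  have hbddf : BddAbove (Set.range fun q : ℝ × ℝ => |f q.1 q.2|) := by
    refine ⟨C, ?_⟩
    rintro r ⟨q, rfl⟩
    exact hC q.1 q.2
  have hfb : ∀ x y : ℝ, |f x y| ≤ fbar := by
    intro x y
    rw [hfbar]
    exact le_csSup hbddf ⟨(x, y), rfl⟩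
  have hfbar0 : 0 ≤ fbar := le_trans (abs_nonneg (f 0 0)) (hfb 0 0)
  -- bound for muT
  have hl : |lam0| ≤ lam1 := by rw [hlam1]; exact le_max_left _ _
  have hlam10 : 0 ≤ lam1 := le_trans (abs_nonneg _) hl
  have hSbdd : BddAbove ((fun q : ℝ × ℝ => |lam0 - c1 q.1 + c1 q.2|)
      '' (Set.Icc 0 1 ×ˢ Set.Icc 0 1)) := by
    have hK : IsCompact ((Set.Icc (0:ℝ) 1 ×ˢ Set.Icc (0:ℝ) 1) : Set (ℝ × ℝ)) :=
      isCompact_Icc.prod isCompact_Icc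
    have hcontS : ContinuousOn (fun q : ℝ × ℝ => |lam0 - c1 q.1 + c1 q.2|)
        (Set.Icc 0 1 ×ˢ Set.Icc 0 1) := by
      apply ContinuousOn.abs
      apply ContinuousOn.add
      · exact continuousOn_const.sub
          ((hc1.continuousOn).comp continuousOn_fst (fun q hq => hq.1))
      · exact (hc1.continuousOn).comp continuousOn_snd (fun q hq => hq.2)
    exact (hK.image_of_continuousOn hcontS).bddAbove
  have hmub : ∀ τ s : ℝ, |muT c' lam0 τ s| ≤ lam1 := by
    intro τ s
    have hval : |muT c' lam0 τ s|
        = |lam0 - c1 (max 0 (min 1 ((τ + s) / 2))) + c1 (max 0 (min 1 ((τ - s) / 2)))| := rfl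
    rw [hval, hlam1]
    refine le_trans (le_csSup hSbdd ?_) (le_max_right _ _)
    exact ⟨(max 0 (min 1 ((τ + s) / 2)), max 0 (min 1 ((τ - s) / 2))),
      ⟨hproj _, hproj _⟩, rfl⟩
  have hM0 : 0 ≤ M := by rw [hM]; positivity
  -- identify G with Gseq c' on E
  have hGeq : ∀ n : ℕ, ∀ ξ η : ℝ, (ξ, η) ∈ Eset → G n ξ η = Gseq c' lam0 f n ξ η := by
    intro n
    induction n with
    | zero => intro ξ η _; rw [hG0]; rfl
    | succ n ih =>
      intro ξ η hq
      rw [hGrec]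
      simp only [Gseq]
      congr 1
      exact phi_congr heqc (fun τ s hts => ih τ s hts) hq
  have hGc : ∀ n, Continuous fun p : ℝ × ℝ => Gseq c' lam0 f n p.1 p.2 := Gseq_cont hc' hfc
  -- the key estimate for Gseq
  have key : ∀ n : ℕ, ∀ ξ η : ℝ, (ξ, η) ∈ Eset →
      |Gseq c' lam0 f (n + 1) ξ η - Gseq c' lam0 f n ξ η|
        ≤ M ^ (n + 2) / (Nat.factorial (n + 1) : ℝ) * (ξ + η) ^ (n + 1) := by
    intro n
    induction n with
    | zero =>
      intro ξ η hq
      obtain ⟨h1, h2, h3, h4⟩ := hq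
      simp only at h1 h2 h3 h4
      have h0s : (0:ℝ) ≤ ξ + η := by linarith
      have h2s : ξ + η ≤ 2 := by linarith
      have e : Gseq c' lam0 f 1 ξ η - Gseq c' lam0 f 0 ξ η
          = PhiOp c' lam0 f (Gzero lam0 f) ξ η := by
        simp only [Gseq]; ring
      rw [e]
      have hHb : ∀ τ s : ℝ, (τ, s) ∈ Eset →
          |Gzero lam0 f τ s| ≤ (lam1 + fbar) / 4 / ((Nat.factorial 1 : ℕ) : ℝ) * (τ + s) ^ 1 := by
        intro τ s hts
        have := gzero_bound hfc hl hfbar0 hfb hts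
        simpa [Nat.factorial] using this
      have hb := phi_bound hc' hfc (gzero_cont hfc) (by positivity) hlam10 hfbar0 hmub hfb 1
        hHb ⟨h1, h2, h3, h4⟩
      have hfact3 : (((1 + 2).factorial : ℕ) : ℝ) = 6 := by norm_num [Nat.factorial]
      rw [hfact3] at hb
      have hcube : (ξ + η) ^ (1 + 2) ≤ 4 * (ξ + η) := by
        have e2 : (ξ + η) ^ (1 + 2) = (ξ + η) * (ξ + η) * (ξ + η) := by ring
        nlinarith [mul_nonneg h0s h0s]
      have hMM : (lam1 + fbar) / 2 * ((lam1 + fbar) / 4) = M ^ 2 / 2 := by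
        rw [hM]; ring
      have target : M ^ (0 + 2) / (Nat.factorial (0 + 1) : ℝ) * (ξ + η) ^ (0 + 1)
          = M ^ 2 * (ξ + η) := by
        norm_num [Nat.factorial]
      rw [target]
      have hM2 : (0:ℝ) ≤ M ^ 2 := sq_nonneg M
      calc |PhiOp c' lam0 f (Gzero lam0 f) ξ η|
          ≤ (lam1 + fbar) / 2 * ((lam1 + fbar) / 4) / 6 * (ξ + η) ^ (1 + 2) := hb
        _ = M ^ 2 / 12 * (ξ + η) ^ (1 + 2) := by rw [hMM]; ring
        _ ≤ M ^ 2 / 12 * (4 * (ξ + η)) := by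
            exact mul_le_mul_of_nonneg_left hcube (by positivity)
        _ ≤ M ^ 2 * (ξ + η) := by nlinarith [mul_nonneg hM2 h0s]
    | succ n ih =>
      intro ξ η hq
      obtain ⟨h1, h2, h3, h4⟩ := hq
      simp only at h1 h2 h3 h4
      have h0s : (0:ℝ) ≤ ξ + η := by linarith
      have h2s : ξ + η ≤ 2 := by linarith
      have e : Gseq c' lam0 f (n + 2) ξ η - Gseq c' lam0 f (n + 1) ξ η
          = PhiOp c' lam0 f
            (fun a b => Gseq c' lam0 f (n + 1) a b - Gseq c' lam0 f n a b) ξ η := by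
        rw [phi_sub hc' hfc (hGc (n + 1)) (hGc n)]
        simp only [Gseq]; ring
      rw [e]
      have hb := phi_bound hc' hfc ((hGc (n + 1)).sub (hGc n)) (A := M ^ (n + 2))
        (pow_nonneg hM0 _) hlam10 hfbar0 hmub hfb (n + 1)
        (fun τ s hts => ih τ s hts) ⟨h1, h2, h3, h4⟩
      rw [← hM] at hb
      simp only [show n + 1 + 2 = n + 3 from by omega] at hb
      -- clean up
      have hfct : ((Nat.factorial (n + 3) : ℕ) : ℝ)
          = ((n:ℝ) + 3) * ((Nat.factorial (n + 2) : ℕ) : ℝ) := by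
        rw [show n + 3 = (n + 2) + 1 from rfl, Nat.factorial_succ]
        push_cast; ring
      have hfp : (0:ℝ) < ((Nat.factorial (n + 2) : ℕ) : ℝ) := by
        exact_mod_cast (n + 2).factorial_pos
      have hn3 : (0:ℝ) < (n:ℝ) + 3 := by positivity
      have hp1 : (ξ + η) ^ (n + 3) ≤ 2 * (ξ + η) ^ (n + 2) := by
        have e2 : (ξ + η) ^ (n + 3) = (ξ + η) ^ (n + 2) * (ξ + η) := by ring
        rw [e2]
        nlinarith [pow_nonneg h0s (n + 2)]
      have hT0 : (0:ℝ) ≤ M * M ^ (n + 2) / ((Nat.factorial (n + 2) : ℕ) : ℝ)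
          * (ξ + η) ^ (n + 2) :=
        mul_nonneg (div_nonneg (mul_nonneg hM0 (pow_nonneg hM0 _)) hfp.le)
          (pow_nonneg h0s _)
      have hfrac : 2 / ((n:ℝ) + 3) ≤ 1 := by
        rw [div_le_one hn3]
        have : (0:ℝ) ≤ (n:ℝ) := Nat.cast_nonneg n
        linarith
      have hfp' : ((Nat.factorial (n + 2) : ℕ) : ℝ) ≠ 0 := ne_of_gt hfp
      have hn3' : ((n:ℝ) + 3) ≠ 0 := ne_of_gt hn3
      calc |PhiOp c' lam0 f
            (fun a b => Gseq c' lam0 f (n + 1) a b - Gseq c' lam0 f n a b) ξ η|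
          ≤ M * M ^ (n + 2) / ((Nat.factorial (n + 3) : ℕ) : ℝ) * (ξ + η) ^ (n + 3) := hb
        _ ≤ M * M ^ (n + 2) / ((Nat.factorial (n + 3) : ℕ) : ℝ)
              * (2 * (ξ + η) ^ (n + 2)) := by
            exact mul_le_mul_of_nonneg_left hp1
              (div_nonneg (mul_nonneg hM0 (pow_nonneg hM0 _)) (Nat.cast_nonneg _))
        _ = (2 / ((n:ℝ) + 3)) * (M * M ^ (n + 2) / ((Nat.factorial (n + 2) : ℕ) : ℝ)
              * (ξ + η) ^ (n + 2)) := by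
            rw [hfct]; field_simp
        _ ≤ 1 * (M * M ^ (n + 2) / ((Nat.factorial (n + 2) : ℕ) : ℝ)
              * (ξ + η) ^ (n + 2)) := mul_le_mul_of_nonneg_right hfrac hT0
        _ = M ^ (n + 1 + 2) / (Nat.factorial (n + 1 + 1) : ℝ) * (ξ + η) ^ (n + 1 + 1) := by
            rw [one_mul, show n + 1 + 1 = n + 2 from by omega,
              show n + 1 + 2 = n + 3 from by omega]
            ring
  -- conclude
  intro n ξ η hq
  rw [hGeq (n + 1) ξ η hq, hGeq n ξ η hq]
  exact key n ξ η hq
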